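/- arXiv:2411.15642 — 3 statements merged into one kernel-verified Lean document; each statement's English description precedes it below -/
import Mathlib

section
/- For any two elements φ, ψ of the centroid Γ(A) of a Zinbiel algebra A, the commutator [φ, ψ] = φ∘ψ − ψ∘φ is a central derivation of A. -/
namespace LinearMap

variable {R A : Type*} [CommSemiring R] [AddCommGroup A] [Module R A]

def IsCentroid (mul : A →ₗ[R] A →ₗ[R] A) (φ : Module.End R A) : Prop :=
  ∀ a b : A, φ (mul a b) = mul (φ a) b ∧ φ (mul a b) = mul a (φ b)

variable {mul : A →ₗ[R] A →ₗ[R] A} {φ ψ : Module.End R A}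

/-- Move `ψ` onto the right factor, `φ` onto the left one, then both back out. -/
theorem IsCentroid.comm_apply_mul (hφ : IsCentroid mul φ) (hψ : IsCentroid mul ψ) (a b : A) :
    φ (ψ (mul a b)) = ψ (φ (mul a b)) := by
  rw [(hψ a b).2, (hφ a (ψ b)).1, (hφ a b).1, (hψ (φ a) b).2]

theorem IsCentroid.commutator_apply_mul (hφ : IsCentroid mul φ) (hψ : IsCentroid mul ψ)
    (a b : A) : (φ ∘ₗ ψ - ψ ∘ₗ φ) (mul a b) = 0 := by
  rw [sub_apply, comp_apply, comp_apply, hφ.comm_apply_mul hψ, sub_self]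

theorem IsCentroid.mul_commutator_apply_left (hφ : IsCentroid mul φ) (hψ : IsCentroid mul ψ)
    (a b : A) : mul ((φ ∘ₗ ψ - ψ ∘ₗ φ) a) b = 0 := by
  calc mul ((φ ∘ₗ ψ - ψ ∘ₗ φ) a) b = mul (φ (ψ a)) b - mul (ψ (φ a)) b := by
        rw [sub_apply, comp_apply, comp_apply, map_sub, sub_apply]
    _ = φ (ψ (mul a b)) - ψ (φ (mul a b)) := by
        rw [← (hφ (ψ a) b).1, ← (hψ a b).1, ← (hψ (φ a) b).1, ← (hφ a b).1]
    _ = 0 := by rw [hφ.comm_apply_mul hψ, sub_self]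

theorem IsCentroid.mul_commutator_apply_right (hφ : IsCentroid mul φ) (hψ : IsCentroid mul ψ)
    (a b : A) : mul a ((φ ∘ₗ ψ - ψ ∘ₗ φ) b) = 0 := by
  calc mul a ((φ ∘ₗ ψ - ψ ∘ₗ φ) b) = mul a (φ (ψ b)) - mul a (ψ (φ b)) := by
        rw [sub_apply, comp_apply, comp_apply, map_sub]
    _ = φ (ψ (mul a b)) - ψ (φ (mul a b)) := by
        rw [← (hφ a (ψ b)).2, ← (hψ a b).2, ← (hψ a (φ b)).2, ← (hφ a b).2]
    _ = 0 := by rw [hφ.comm_apply_mul hψ, sub_self]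

end LinearMap

theorem centroid_commutator_is_central_derivation_general {K : Type*} [Field K] {A : Type*}
    [AddCommGroup A] [Module K A] (mul : A →ₗ[K] A →ₗ[K] A)
    (φ ψ : Module.End K A)
    (hφ : ∀ a b : A, φ (mul a b) = mul (φ a) b ∧ φ (mul a b) = mul a (φ b))
    (hψ : ∀ a b : A, ψ (mul a b) = mul (ψ a) b ∧ ψ (mul a b) = mul a (ψ b)) :
    ∀ a b : A, (φ ∘ₗ ψ - ψ ∘ₗ φ) (mul a b) = 0 ∧
      mul ((φ ∘ₗ ψ - ψ ∘ₗ φ) a) b = 0 ∧ mul a ((φ ∘ₗ ψ - ψ ∘ₗ φ) b) = 0 := by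
  have hφ : LinearMap.IsCentroid mul φ := hφ
  have hψ : LinearMap.IsCentroid mul ψ := hψ
  exact fun a b => ⟨hφ.commutator_apply_mul hψ a b, hφ.mul_commutator_apply_left hψ a b,
    hφ.mul_commutator_apply_right hψ a b⟩

/-- The commutator of two centroid elements of a Zinbiel algebra is a
central derivation. -/
theorem centroid_commutator_is_central_derivation {K : Type*} [Field K] {A : Type*}
    [AddCommGroup A] [Module K A] (mul : A →ₗ[K] A →ₗ[K] A)
    (zinbiel : ∀ a b c : A, mul (mul a b) c = mul a (mul b c) + mul a (mul c b))
    (φ ψ : Module.End K A)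
    (hφ : ∀ a b : A, φ (mul a b) = mul (φ a) b ∧ φ (mul a b) = mul a (φ b))
    (hψ : ∀ a b : A, ψ (mul a b) = mul (ψ a) b ∧ ψ (mul a b) = mul a (ψ b)) :
    ∀ a b : A, (φ ∘ₗ ψ - ψ ∘ₗ φ) (mul a b) = 0 ∧
      mul ((φ ∘ₗ ψ - ψ ∘ₗ φ) a) b = 0 ∧ mul a ((φ ∘ₗ ψ - ψ ∘ₗ φ) b) = 0 :=
  centroid_commutator_is_central_derivation_general mul φ ψ hφ hψ
end

section
/- If A = A₁ ⊕ A₂ is a direct sum of ideals of a Zinbiel algebra A, and the center of A is trivial, then every element of the centroid Γ(A) preserves both A₁ and A₂, so Γ(A) decomposes as Γ(A₁) ⊕ Γ(A₂) via restriction. -/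
/-!
Since `A₁` and `A₂` are ideals with `A₁ ∩ A₂ = 0`, all products between them vanish, so the
product of `A` is computed componentwise and the projection `x ↦ x₂` onto `A₂` is multiplicative.
If `φ` is in the centroid and `x ∈ A₁`, then `φ x • a = x • φ a ∈ A₁`, so the `A₂`-component
`v` of `φ x` satisfies `v • a = v • a₂ = (φ x • a)₂ = 0`, and likewise `a • v = 0`: `v` is central,
hence zero. Thus `φ` restricts to both ideals, and conversely centroid elements of `A₁` and `A₂`
glue along `A = A₁ ⊕ A₂` to one of `A`.
-/

section Centroid

open Submodule

variable {R A : Type*} [CommRing R] [AddCommGroup A] [Module R A] (mul : A →ₗ[R] A →ₗ[R] A)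

def IsMulIdeal (I : Submodule R A) : Prop :=
  ∀ a : A, ∀ x ∈ I, mul a x ∈ I ∧ mul x a ∈ I

def IsCentroid (φ : Module.End R A) : Prop :=
  ∀ a b : A, φ (mul a b) = mul (φ a) b ∧ φ (mul a b) = mul a (φ b)

def IsCentroidOn (I : Submodule R A) (ψ : Module.End R I) : Prop :=
  ∀ x y z : I, (z : A) = mul (x : A) (y : A) →
    ((ψ z : I) : A) = mul ((ψ x : I) : A) (y : A) ∧ ((ψ z : I) : A) = mul (x : A) ((ψ y : I) : A)

variable {mul} {I J : Submodule R A}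

theorem mul_eq_zero_of_disjoint (hIJ : Disjoint I J) (hI : IsMulIdeal mul I)
    (hJ : IsMulIdeal mul J) {x y : A} (hx : x ∈ I) (hy : y ∈ J) : mul x y = 0 :=
  (disjoint_def.mp hIJ) _ (hI y x hx).2 (hJ x y hy).1

theorem IsCentroid.isCentroidOn_restrict {φ : Module.End R A} (hφ : IsCentroid mul φ)
    (hφI : ∀ x ∈ I, φ x ∈ I) : IsCentroidOn mul I (φ.restrict hφI) := by
  intro x y z hz
  change φ z = _ ∧ φ z = _
  rw [hz]
  exact hφ x y

section Complement

variable (h : IsCompl I J) (hI : IsMulIdeal mul I) (hJ : IsMulIdeal mul J)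
include h hI hJ

theorem mul_projection_right {u : A} (hu : u ∈ I) (b : A) :
    mul u (I.projection J h b) = mul u b := by
  conv_rhs => rw [← projection_add_projection_eq_self h b]
  rw [map_add, mul_eq_zero_of_disjoint h.disjoint hI hJ hu (projection_apply_mem _ _), add_zero]

theorem mul_projection_left {u : A} (hu : u ∈ I) (a : A) :
    mul (I.projection J h a) u = mul a u := by
  conv_rhs => rw [← projection_add_projection_eq_self h a]
  rw [map_add, LinearMap.add_apply,
    mul_eq_zero_of_disjoint h.symm.disjoint hJ hI (projection_apply_mem _ _) hu, add_zero]

theorem mul_eq_mul_projection_add (a b : A) :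
    mul a b = mul (I.projection J h a) (I.projection J h b)
      + mul (J.projection I h.symm a) (J.projection I h.symm b) := by
  conv_lhs => rw [← projection_add_projection_eq_self h a]
  rw [map_add, LinearMap.add_apply, mul_projection_right h hI hJ (projection_apply_mem _ _),
    mul_projection_right h.symm hJ hI (projection_apply_mem _ _)]

theorem projection_mul (a b : A) :
    I.projection J h (mul a b) = mul (I.projection J h a) (I.projection J h b) := by
  rw [mul_eq_mul_projection_add h hI hJ a b, map_add,
    projection_apply_of_mem_left h (hI _ _ (projection_apply_mem _ _)).1,
    projection_apply_of_mem_right h (hJ _ _ (projection_apply_mem _ _)).1, add_zero]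

theorem IsCentroid.mem_of_mem
    (hcenter : ∀ x : A, (∀ a : A, mul x a = 0 ∧ mul a x = 0) → x = 0)
    {φ : Module.End R A} (hφ : IsCentroid mul φ) {x : A} (hx : x ∈ I) : φ x ∈ I := by
  rw [← projection_apply_eq_zero_iff h.symm]
  set Q := J.projection I h.symm
  have hxa (a : A) : mul (φ x) a ∈ I := by
    rw [← (hφ x a).1, (hφ x a).2]; exact (hI _ x hx).2
  have hax (a : A) : mul a (φ x) ∈ I := by
    rw [← (hφ a x).2, (hφ a x).1]; exact (hI _ x hx).1
  refine hcenter _ fun a => ⟨?_, ?_⟩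
  · calc mul (Q (φ x)) a = mul (Q (φ x)) (Q a) :=
          (mul_projection_right h.symm hJ hI (projection_apply_mem _ _) a).symm
      _ = Q (mul (φ x) a) := (projection_mul h.symm hJ hI _ _).symm
      _ = 0 := projection_apply_of_mem_right h.symm (hxa a)
  · calc mul a (Q (φ x)) = mul (Q a) (Q (φ x)) :=
          (mul_projection_left h.symm hJ hI (projection_apply_mem _ _) a).symm
      _ = Q (mul a (φ x)) := (projection_mul h.symm hJ hI _ _).symm
      _ = 0 := projection_apply_of_mem_right h.symm (hax a)

theorem isCentroid_ofIsCompl {ψ₁ : Module.End R I} {ψ₂ : Module.End R J}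
    (hψ₁ : IsCentroidOn mul I ψ₁) (hψ₂ : IsCentroidOn mul J ψ₂) :
    IsCentroid mul (LinearMap.ofIsCompl h (I.subtype ∘ₗ ψ₁) (J.subtype ∘ₗ ψ₂)) := by
  set P := I.projectionOnto J h
  set Q := J.projectionOnto I h.symm
  have hP (a b : A) : (P (mul a b) : A) = mul (P a : A) (P b : A) := projection_mul h hI hJ a b
  have hQ (a b : A) : (Q (mul a b) : A) = mul (Q a : A) (Q b : A) :=
    projection_mul h.symm hJ hI a b
  intro a b
  simp only [LinearMap.ofIsCompl_eq_add, LinearMap.add_apply, LinearMap.comp_apply,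
    subtype_apply, map_add]
  constructor
  · rw [(hψ₁ _ _ _ (hP a b)).1, (hψ₂ _ _ _ (hQ a b)).1]
    exact congrArg₂ (· + ·) (mul_projection_right h hI hJ (ψ₁ (P a)).2 b)
      (mul_projection_right h.symm hJ hI (ψ₂ (Q a)).2 b)
  · rw [(hψ₁ _ _ _ (hP a b)).2, (hψ₂ _ _ _ (hQ a b)).2]
    exact congrArg₂ (· + ·) (mul_projection_left h hI hJ (ψ₁ (P b)).2 a)
      (mul_projection_left h.symm hJ hI (ψ₂ (Q b)).2 a)

noncomputable def centroidEquivProd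
    (hcenter : ∀ x : A, (∀ a : A, mul x a = 0 ∧ mul a x = 0) → x = 0) :
    {φ : Module.End R A // IsCentroid mul φ} ≃
      {ψ : Module.End R I // IsCentroidOn mul I ψ} × {ψ : Module.End R J // IsCentroidOn mul J ψ}
    where
  toFun φ :=
    (⟨_, φ.2.isCentroidOn_restrict fun _ => φ.2.mem_of_mem h hI hJ hcenter⟩,
      ⟨_, φ.2.isCentroidOn_restrict fun _ => φ.2.mem_of_mem h.symm hJ hI hcenter⟩)
  invFun ψ := ⟨_, isCentroid_ofIsCompl h hI hJ ψ.1.2 ψ.2.2⟩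
  left_inv φ := Subtype.ext (LinearMap.ofIsCompl_eq h (fun _ => rfl) fun _ => rfl)
  right_inv ψ := Prod.ext
    (Subtype.ext (LinearMap.ext fun u => Subtype.ext (LinearMap.ofIsCompl_apply_left h u)))
    (Subtype.ext (LinearMap.ext fun v => Subtype.ext (LinearMap.ofIsCompl_apply_right h v)))

end Complement

end Centroid

theorem centroid_decomposes_general {K : Type*} [Field K] {A : Type*}
    [AddCommGroup A] [Module K A] (mul : A →ₗ[K] A →ₗ[K] A)
    (A₁ A₂ : Submodule K A)
    (hI₁ : ∀ a : A, ∀ x ∈ A₁, mul a x ∈ A₁ ∧ mul x a ∈ A₁)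
    (hI₂ : ∀ a : A, ∀ x ∈ A₂, mul a x ∈ A₂ ∧ mul x a ∈ A₂)
    (hcompl : IsCompl A₁ A₂)
    (hcenter : ∀ x : A, (∀ a : A, mul x a = 0 ∧ mul a x = 0) → x = 0) :
    (∀ φ : Module.End K A,
        (∀ a b : A, φ (mul a b) = mul (φ a) b ∧ φ (mul a b) = mul a (φ b)) →
        (∀ x ∈ A₁, φ x ∈ A₁) ∧ (∀ x ∈ A₂, φ x ∈ A₂)) ∧
    ∃ e : {φ : Module.End K A //
            ∀ a b : A, φ (mul a b) = mul (φ a) b ∧ φ (mul a b) = mul a (φ b)} ≃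
          {ψ : Module.End K A₁ // ∀ x y z : A₁, (z : A) = mul (x : A) (y : A) →
              ((ψ z : A₁) : A) = mul ((ψ x : A₁) : A) (y : A) ∧
              ((ψ z : A₁) : A) = mul (x : A) ((ψ y : A₁) : A)} ×
          {ψ : Module.End K A₂ // ∀ x y z : A₂, (z : A) = mul (x : A) (y : A) →
              ((ψ z : A₂) : A) = mul ((ψ x : A₂) : A) (y : A) ∧
              ((ψ z : A₂) : A) = mul (x : A) ((ψ y : A₂) : A)},
      ∀ φ, (∀ x : A₁, (((e φ).1.1 x : A₁) : A) = φ.1 (x : A)) ∧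
           (∀ x : A₂, (((e φ).2.1 x : A₂) : A) = φ.1 (x : A)) :=
  ⟨fun _ hφ => ⟨fun _ => IsCentroid.mem_of_mem hcompl hI₁ hI₂ hcenter hφ,
      fun _ => IsCentroid.mem_of_mem hcompl.symm hI₂ hI₁ hcenter hφ⟩,
    centroidEquivProd hcompl hI₁ hI₂ hcenter, fun _ => ⟨fun _ => rfl, fun _ => rfl⟩⟩

/-- If `A = A₁ ⊕ A₂` is a direct sum of ideals of a Zinbiel algebra with trivial
center, then every centroid element preserves `A₁` and `A₂`, and the centroid
decomposes as `Γ(A₁) ⊕ Γ(A₂)` via restriction. -/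
theorem centroid_decomposes {K : Type*} [Field K] {A : Type*}
    [AddCommGroup A] [Module K A] (mul : A →ₗ[K] A →ₗ[K] A)
    (zinbiel : ∀ a b c : A, mul (mul a b) c = mul a (mul b c) + mul a (mul c b))
    (A₁ A₂ : Submodule K A)
    (hI₁ : ∀ a : A, ∀ x ∈ A₁, mul a x ∈ A₁ ∧ mul x a ∈ A₁)
    (hI₂ : ∀ a : A, ∀ x ∈ A₂, mul a x ∈ A₂ ∧ mul x a ∈ A₂)
    (hcompl : IsCompl A₁ A₂)
    (hcenter : ∀ x : A, (∀ a : A, mul x a = 0 ∧ mul a x = 0) → x = 0) :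
    (∀ φ : Module.End K A,
        (∀ a b : A, φ (mul a b) = mul (φ a) b ∧ φ (mul a b) = mul a (φ b)) →
        (∀ x ∈ A₁, φ x ∈ A₁) ∧ (∀ x ∈ A₂, φ x ∈ A₂)) ∧
    ∃ e : {φ : Module.End K A //
            ∀ a b : A, φ (mul a b) = mul (φ a) b ∧ φ (mul a b) = mul a (φ b)} ≃
          {ψ : Module.End K A₁ // ∀ x y z : A₁, (z : A) = mul (x : A) (y : A) →
              ((ψ z : A₁) : A) = mul ((ψ x : A₁) : A) (y : A) ∧
              ((ψ z : A₁) : A) = mul (x : A) ((ψ y : A₁) : A)} ×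
          {ψ : Module.End K A₂ // ∀ x y z : A₂, (z : A) = mul (x : A) (y : A) →
              ((ψ z : A₂) : A) = mul ((ψ x : A₂) : A) (y : A) ∧
              ((ψ z : A₂) : A) = mul (x : A) ((ψ y : A₂) : A)},
      ∀ φ, (∀ x : A₁, (((e φ).1.1 x : A₁) : A) = φ.1 (x : A)) ∧
           (∀ x : A₂, (((e φ).2.1 x : A₂) : A) = φ.1 (x : A)) :=
  centroid_decomposes_general mul A₁ A₂ hI₁ hI₂ hcompl hcenter
end

section
/- Consider the 2-dimensional complex Zinbiel algebra A with basis {e₁, e₂} and multiplication e₁ • e₁ = e₂ (all other basis products zero). Then the space of central derivations of A is exactly the set of linear maps φ with φ(e₁) = c·e₂ and φ(e₂) = 0 for a scalar c; in particular, CD(A) is 1-dimensional. -/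
/-!
Every product is `(x₀ y₀) e₁`, so all products land in `K e₁`, which is annihilated on both
sides; hence both sides of the Zinbiel identity vanish. A central derivation must kill
`A • A = K e₁` and take values in the annihilator `K e₁`, so it is a multiple of the map
`e₀ ↦ e₁, e₁ ↦ 0`.
-/

/-- The submodule of central derivations of an algebra with product `mul`. -/
def centralDerivations {K A : Type*} [Field K] [AddCommGroup A] [Module K A]
    (mul : A →ₗ[K] A →ₗ[K] A) : Submodule K (Module.End K A) where
  carrier := {φ | ∀ a b : A, φ (mul a b) = 0 ∧ mul (φ a) b = 0 ∧ mul a (φ b) = 0}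
  add_mem' := by
    intro φ ψ hφ hψ a b
    obtain ⟨h1, h2, h3⟩ := hφ a b
    obtain ⟨g1, g2, g3⟩ := hψ a b
    refine ⟨?_, ?_, ?_⟩ <;>
      simp [LinearMap.add_apply, h1, g1, h2, g2, h3, g3, map_add]
  zero_mem' := by intro a b; simp
  smul_mem' := by
    intro c φ hφ a b
    obtain ⟨h1, h2, h3⟩ := hφ a b
    refine ⟨?_, ?_, ?_⟩ <;>
      simp [LinearMap.smul_apply, h1, h2, h3, map_smul]

def IsZinbiel {R M : Type*} [CommSemiring R] [AddCommMonoid M] [Module R M]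
    (mul : M →ₗ[R] M →ₗ[R] M) : Prop :=
  ∀ a b c, mul (mul a b) c = mul a (mul b c) + mul a (mul c b)

theorem IsZinbiel.of_mul_mul_eq_zero {R M : Type*} [CommSemiring R] [AddCommMonoid M]
    [Module R M] {mul : M →ₗ[R] M →ₗ[R] M} (hl : ∀ a b c, mul (mul a b) c = 0)
    (hr : ∀ a b c, mul a (mul b c) = 0) : IsZinbiel mul := fun a b c => by
  rw [hl, hr, hr, add_zero]

section NilMul

variable (K : Type*) [Field K]

def nilMul : (Fin 2 → K) →ₗ[K] (Fin 2 → K) →ₗ[K] (Fin 2 → K) :=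
  LinearMap.mk₂ K (fun x y => (x 0 * y 0) • Pi.single 1 1)
    (fun _ _ _ => by simp only [Pi.add_apply, add_mul, add_smul])
    (fun _ _ _ => by simp only [Pi.smul_apply, smul_eq_mul, mul_assoc, mul_smul])
    (fun _ _ _ => by simp only [Pi.add_apply, mul_add, add_smul])
    (fun _ _ _ => by simp only [Pi.smul_apply, smul_eq_mul, mul_left_comm, mul_smul])

def shiftEnd : Module.End K (Fin 2 → K) :=
  (LinearMap.proj 0).smulRight (Pi.single 1 1)

variable {K}

@[simp]
theorem nilMul_apply (x y : Fin 2 → K) : nilMul K x y = (x 0 * y 0) • Pi.single 1 1 :=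
  rfl

@[simp]
theorem shiftEnd_apply (x : Fin 2 → K) : shiftEnd K x = x 0 • Pi.single 1 1 :=
  rfl

theorem eq_smul_single_one_of_apply_zero {x : Fin 2 → K} (hx : x 0 = 0) :
    x = x 1 • Pi.single 1 1 := by
  ext i
  fin_cases i <;> simp [hx]

theorem eq_nilMul_of_basis {mul : (Fin 2 → K) →ₗ[K] (Fin 2 → K) →ₗ[K] (Fin 2 → K)}
    (h00 : mul (Pi.single 0 1) (Pi.single 0 1) = Pi.single 1 1)
    (hzero : ∀ i j : Fin 2, ¬(i = 0 ∧ j = 0) → mul (Pi.single i 1) (Pi.single j 1) = 0) :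
    mul = nilMul K := by
  refine LinearMap.ext_basis (Pi.basisFun K (Fin 2)) (Pi.basisFun K (Fin 2)) fun i j => ?_
  fin_cases i <;> fin_cases j <;> simp [h00, hzero]

theorem isZinbiel_nilMul : IsZinbiel (nilMul K) :=
  .of_mul_mul_eq_zero (by simp) (by simp)

theorem smul_shiftEnd_eq_iff (c : K) (φ : Module.End K (Fin 2 → K)) :
    c • shiftEnd K = φ ↔ φ (Pi.single 0 1) = c • Pi.single 1 1 ∧ φ (Pi.single 1 1) = 0 := by
  constructor
  · rintro rfl
    simp
  · rintro ⟨h₀, h₁⟩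
    refine (Pi.basisFun K (Fin 2)).ext (Fin.forall_fin_two.2 ⟨?_, ?_⟩) <;> simp [h₀, h₁]

theorem shiftEnd_mem_centralDerivations : shiftEnd K ∈ centralDerivations (nilMul K) :=
  fun a b => by simp

theorem centralDerivations_nilMul : centralDerivations (nilMul K) = K ∙ shiftEnd K := by
  refine le_antisymm (fun φ hφ => ?_)
    ((Submodule.span_singleton_le_iff_mem _ _).2 shiftEnd_mem_centralDerivations)
  obtain ⟨hφ₁, hφ₀, -⟩ := hφ (Pi.single 0 1) (Pi.single 0 1)
  simp only [nilMul_apply, Pi.single_eq_same, mul_one, one_smul, smul_eq_zero,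
    Pi.single_eq_zero_iff, one_ne_zero, or_false] at hφ₁ hφ₀
  exact Submodule.mem_span_singleton.2 ⟨φ (Pi.single 0 1) 1,
    (smul_shiftEnd_eq_iff _ _).2 ⟨eq_smul_single_one_of_apply_zero hφ₀, hφ₁⟩⟩

theorem shiftEnd_ne_zero : shiftEnd K ≠ 0 := fun h => by
  simpa using LinearMap.congr_fun h (Pi.single 0 1)

end NilMul

/-- For the 2-dimensional complex Zinbiel algebra with `e₁ • e₁ = e₂` and all
other basis products zero, the product is Zinbiel, the central derivations are
exactly the maps `φ(e₁) = c • e₂`, `φ(e₂) = 0`, and `CD(A)` is 1-dimensional. -/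
theorem central_derivations_dim_two_algebra
    (mul : (Fin 2 → ℂ) →ₗ[ℂ] (Fin 2 → ℂ) →ₗ[ℂ] (Fin 2 → ℂ))
    (e : Fin 2 → (Fin 2 → ℂ)) (he : ∀ i, e i = Pi.single i 1)
    (h00 : mul (e 0) (e 0) = e 1)
    (hzero : ∀ i j : Fin 2, ¬(i = 0 ∧ j = 0) → mul (e i) (e j) = 0) :
    (∀ a b c, mul (mul a b) c = mul a (mul b c) + mul a (mul c b)) ∧
    ((centralDerivations mul : Set (Module.End ℂ (Fin 2 → ℂ))) =
      {φ | ∃ c : ℂ, φ (e 0) = c • e 1 ∧ φ (e 1) = 0}) ∧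
    Module.finrank ℂ (centralDerivations mul) = 1 := by
  obtain rfl : e = fun i => Pi.single i 1 := funext he
  obtain rfl := eq_nilMul_of_basis h00 hzero
  refine ⟨isZinbiel_nilMul, ?_, ?_⟩
  · ext φ
    rw [SetLike.mem_coe, centralDerivations_nilMul, Submodule.mem_span_singleton]
    exact exists_congr fun c => smul_shiftEnd_eq_iff c φ
  · rw [centralDerivations_nilMul, finrank_span_singleton shiftEnd_ne_zero]
end
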